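/- arXiv:1008.3213 — 2 statements merged into one kernel-verified Lean document; each statement's English description precedes it below -/
import Mathlib

section
/- Let G be a finite graph with probability weights μ such that every independent set I satisfies μ(I) ≤ μ(N(I)). Let G' = G × K_2 with the product measure (K_2 carries the uniform measure 1/2, 1/2), and let (X, Y) be the canonical bipartition of G'. Then in the bipartite graph G', every subset A ⊆ X satisfies μ_{G'}(A) ≤ μ_{G'}(N_{G'}(A)), and every subset B ⊆ Y satisfies μ_{G'}(B) ≤ μ_{G'}(N_{G'}(B)). -/
open Finset Filter

/-- `I` is an independent set of vertices in `G`. -/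
def IsIndepSet {V : Type*} (G : SimpleGraph V) (I : Finset V) : Prop :=
  ∀ u ∈ I, ∀ v ∈ I, ¬ G.Adj u v

/-- The neighborhood `N(I)`: vertices adjacent to at least one vertex of `I`. -/
noncomputable def nbhd {V : Type*} [Fintype V] (G : SimpleGraph V) (I : Finset V) : Finset V :=
  @Finset.filter _ (fun v => ∃ u ∈ I, G.Adj u v) (Classical.decPred _) Finset.univ

/-- Measure of a finite set of vertices: sum of the weights. -/
def fmeas {V : Type*} (μ : V → ℝ) (S : Finset V) : ℝ := ∑ v ∈ S, μ v

/-- The `n`-fold tensor (categorical) power of `G`. -/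
def tpow {V : Type*} (G : SimpleGraph V) (n : ℕ) : SimpleGraph (Fin n → V) where
  Adj u v := u ≠ v ∧ ∀ i, G.Adj (u i) (v i)
  symm := ⟨fun u v h => ⟨h.1.symm, fun i => (h.2 i).symm⟩⟩
  loopless := ⟨fun u h => h.1 rfl⟩

/-- Product measure of a set of `n`-tuples. -/
noncomputable def pmeas {V : Type*} (μ : V → ℝ) (n : ℕ) (S : Finset (Fin n → V)) : ℝ :=
  ∑ x ∈ S, ∏ i, μ (x i)

/-- `ᾱ(G)`: the supremum (= maximum) of the measures of independent sets of `G`. -/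
noncomputable def alphaBar {V : Type*} (G : SimpleGraph V) (μ : V → ℝ) : ℝ :=
  sSup {x : ℝ | ∃ I : Finset V, IsIndepSet G I ∧ x = fmeas μ I}

/-- `ᾱ(G^n)` with the product measure. -/
noncomputable def alphaPow {V : Type*} (G : SimpleGraph V) (μ : V → ℝ) (n : ℕ) : ℝ :=
  alphaBar (tpow G n) (fun x => ∏ i, μ (x i))

/-- The tensor product `G × K₂`, realized on the vertex set `V × Bool`. -/
def timesK2 {V : Type*} (G : SimpleGraph V) : SimpleGraph (V × Bool) where
  Adj p q := G.Adj p.1 q.1 ∧ p.2 ≠ q.2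
  symm := ⟨fun p q h => ⟨h.1.symm, h.2.symm⟩⟩
  loopless := ⟨fun p h => h.2 rfl⟩

/-!
A set in one layer of `G × K₂` has the form `T × {b}`, and its neighbourhood is `N(T) × {!b}`,
both weighted by `μ / 2`. So the claim is the inequality `μ(T) ≤ μ(N(T))` for an arbitrary
vertex set `T`, which the hypothesis yields through the independent set `T \ N(T)`.
-/

@[simp]
lemma mem_nbhd {V : Type*} [Fintype V] (G : SimpleGraph V) (S : Finset V) (v : V) :
    v ∈ nbhd G S ↔ ∃ u ∈ S, G.Adj u v := by
  simp [nbhd]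

lemma fmeas_le_fmeas_nbhd {V : Type*} [Fintype V] (G : SimpleGraph V) (μ : V → ℝ)
    (hμ0 : ∀ v, 0 ≤ μ v)
    (hI : ∀ I : Finset V, IsIndepSet G I → fmeas μ I ≤ fmeas μ (nbhd G I))
    (S : Finset V) : fmeas μ S ≤ fmeas μ (nbhd G S) := by
  classical
  set I := S \ nbhd G S
  have hI_indep : IsIndepSet G I := fun u hu v hv hadj =>
    (mem_sdiff.mp hu).2 ((mem_nbhd G S u).mpr ⟨v, (mem_sdiff.mp hv).1, hadj.symm⟩)
  have hnbhd_I : nbhd G I ⊆ nbhd G S \ S := by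
    intro v hv
    obtain ⟨u, hu, hadj⟩ := (mem_nbhd G I v).mp hv
    obtain ⟨huS, hu_nbhd⟩ := mem_sdiff.mp hu
    exact mem_sdiff.mpr ⟨(mem_nbhd G S v).mpr ⟨u, huS, hadj⟩,
      fun hvS => hu_nbhd ((mem_nbhd G S u).mpr ⟨v, hvS, hadj.symm⟩)⟩
  have hdisj : Disjoint (nbhd G I) (S ∩ nbhd G S) :=
    disjoint_left.mpr fun v hv hv' => (mem_sdiff.mp (hnbhd_I hv)).2 (mem_inter.mp hv').1
  have hsub : nbhd G I ∪ S ∩ nbhd G S ⊆ nbhd G S :=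
    union_subset (fun v hv => (mem_sdiff.mp (hnbhd_I hv)).1) inter_subset_right
  calc fmeas μ S = fmeas μ I + fmeas μ (S ∩ nbhd G S) := by
        rw [fmeas, fmeas, fmeas, ← sum_inter_add_sum_sdiff S (nbhd G S), add_comm]
    _ ≤ fmeas μ (nbhd G I) + fmeas μ (S ∩ nbhd G S) := by gcongr; exact hI I hI_indep
    _ = fmeas μ (nbhd G I ∪ S ∩ nbhd G S) := (sum_union hdisj).symm
    _ ≤ fmeas μ (nbhd G S) := sum_le_sum_of_subset_of_nonneg hsub fun v _ _ => hμ0 v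

lemma fmeas_product_singleton {V W : Type*} (f : V → ℝ) (T : Finset V) (w : W) :
    fmeas (fun p : V × W => f p.1) (T ×ˢ {w}) = fmeas f T := by
  simp [fmeas]

lemma eq_image_fst_product_singleton {V W : Type*} [DecidableEq V] (A : Finset (V × W))
    (w : W) (hA : ∀ p ∈ A, p.2 = w) : A = A.image Prod.fst ×ˢ {w} := by
  ext ⟨v, b⟩
  simp only [mem_product, mem_image, mem_singleton]
  constructor
  · intro hp
    exact ⟨⟨(v, b), hp, rfl⟩, hA _ hp⟩
  · rintro ⟨⟨p, hp, rfl⟩, rfl⟩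
    simpa [← hA p hp] using hp

lemma nbhd_timesK2_product_singleton {V : Type*} [Fintype V] (G : SimpleGraph V)
    (T : Finset V) (b : Bool) :
    nbhd (timesK2 G) (T ×ˢ {b}) = nbhd G T ×ˢ {!b} := by
  ext ⟨v, c⟩
  cases b <;> cases c <;> simp [timesK2]

lemma fmeas_le_fmeas_nbhd_timesK2 {V : Type*} [Fintype V] (G : SimpleGraph V) (μ : V → ℝ)
    (hμ0 : ∀ v, 0 ≤ μ v)
    (hI : ∀ I : Finset V, IsIndepSet G I → fmeas μ I ≤ fmeas μ (nbhd G I))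
    (b : Bool) (A : Finset (V × Bool)) (hA : ∀ p ∈ A, p.2 = b) :
    fmeas (fun p : V × Bool => μ p.1 / 2) A ≤
      fmeas (fun p : V × Bool => μ p.1 / 2) (nbhd (timesK2 G) A) := by
  classical
  rw [eq_image_fst_product_singleton A b hA, nbhd_timesK2_product_singleton,
    fmeas_product_singleton (fun v => μ v / 2), fmeas_product_singleton (fun v => μ v / 2),
    fmeas, fmeas, ← sum_div, ← sum_div]
  exact div_le_div_of_nonneg_right (fmeas_le_fmeas_nbhd G μ hμ0 hI _) zero_le_two

theorem stmt_11_general {V : Type*} [Fintype V] (G : SimpleGraph V) (μ : V → ℝ)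
    (hμ0 : ∀ v, 0 ≤ μ v)
    (hI : ∀ I : Finset V, IsIndepSet G I → fmeas μ I ≤ fmeas μ (nbhd G I)) :
    (∀ A : Finset (V × Bool), (∀ p ∈ A, p.2 = false) →
      fmeas (fun p : V × Bool => μ p.1 / 2) A ≤
        fmeas (fun p : V × Bool => μ p.1 / 2) (nbhd (timesK2 G) A)) ∧
    (∀ B : Finset (V × Bool), (∀ p ∈ B, p.2 = true) →
      fmeas (fun p : V × Bool => μ p.1 / 2) B ≤
        fmeas (fun p : V × Bool => μ p.1 / 2) (nbhd (timesK2 G) B)) :=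
  ⟨fmeas_le_fmeas_nbhd_timesK2 G μ hμ0 hI false, fmeas_le_fmeas_nbhd_timesK2 G μ hμ0 hI true⟩

theorem stmt_11 {V : Type*} [Fintype V] (G : SimpleGraph V) (μ : V → ℝ)
    (hμ0 : ∀ v, 0 ≤ μ v) (hμ1 : ∑ v, μ v = 1)
    (hI : ∀ I : Finset V, IsIndepSet G I → fmeas μ I ≤ fmeas μ (nbhd G I)) :
    (∀ A : Finset (V × Bool), (∀ p ∈ A, p.2 = false) →
      fmeas (fun p : V × Bool => μ p.1 / 2) A ≤
        fmeas (fun p : V × Bool => μ p.1 / 2) (nbhd (timesK2 G) A)) ∧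
    (∀ B : Finset (V × Bool), (∀ p ∈ B, p.2 = true) →
      fmeas (fun p : V × Bool => μ p.1 / 2) B ≤
        fmeas (fun p : V × Bool => μ p.1 / 2) (nbhd (timesK2 G) B)) :=
  stmt_11_general G μ hμ0 hI
end

section
/- Let G be a finite graph with probability weights and H a finite vertex transitive graph (with uniform measure) admitting a measure preserving homomorphism H → G. Then lim_{n→∞} ᾱ(G^n) ≤ ᾱ(H). -/
open Finset Filter

/-!
Pulling independent sets back along `h` and its powers `hⁿ : Hⁿ → Gⁿ` (which stay measure
preserving for the product weights) gives `ᾱ(Gⁿ) ≤ ᾱ(Hⁿ)`. For `n ≥ 1` and a tuple `φ` of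
automorphisms of `H`, the map `x ↦ (φ i x)ᵢ` is a homomorphism `H → Hⁿ`, so it pulls an independent
set `S` of `Hⁿ` back to one of `H`. When `φ` is uniformly random, `(φ i x)ᵢ` is uniform on `Vⁿ` for
each `x` by vertex transitivity, so these pullbacks have average measure `μⁿ(S)`; hence
`ᾱ(Hⁿ) ≤ ᾱ(H)`, and every term of the sequence, hence its limit, is at most `ᾱ(H)`.
-/

instance SimpleGraph.Iso.instFinite {V W : Type*} [Finite V] (G : SimpleGraph V)
    (G' : SimpleGraph W) : Finite (G ≃g G') :=
  Finite.of_injective _ RelIso.toEquiv_injective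

noncomputable instance SimpleGraph.Iso.instFintype {V W : Type*} [Finite V] (G : SimpleGraph V)
    (G' : SimpleGraph W) : Fintype (G ≃g G') :=
  Fintype.ofFinite _

section Weights

variable {V W : Type*} [Fintype V]

noncomputable def preimageFinset (f : V → W) (S : Finset W) : Finset V :=
  @Finset.filter _ (fun x => f x ∈ S) (Classical.decPred _) univ

@[simp]
lemma mem_preimageFinset {f : V → W} {S : Finset W} {x : V} :
    x ∈ preimageFinset f S ↔ f x ∈ S := by
  simp [preimageFinset]

def PreservesWeights (ν : V → ℝ) (μ : W → ℝ) (f : V → W) : Prop :=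
  ∀ S : Finset W, fmeas ν (preimageFinset f S) = fmeas μ S

lemma preservesWeights_of_fmeas_preimage_singleton {ν : V → ℝ} {μ : W → ℝ} {f : V → W}
    (hf : ∀ w, fmeas ν (preimageFinset f {w}) = μ w) : PreservesWeights ν μ f := by
  classical
  intro S
  have hfiber : ∀ w ∈ S, preimageFinset f {w} = (preimageFinset f S).filter (f · = w) := by
    intro w hw
    ext x
    simp only [mem_preimageFinset, Finset.mem_singleton, Finset.mem_filter]
    exact ⟨fun hx => ⟨hx ▸ hw, hx⟩, And.right⟩
  calc fmeas ν (preimageFinset f S)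
      = ∑ w ∈ S, ∑ x ∈ (preimageFinset f S).filter (f · = w), ν x :=
        (Finset.sum_fiberwise_of_maps_to (fun x hx => mem_preimageFinset.mp hx) ν).symm
    _ = fmeas μ S := Finset.sum_congr rfl fun w hw => by rw [← hfiber w hw]; exact hf w

lemma PreservesWeights.pi {ν : V → ℝ} {μ : W → ℝ} {f : V → W} (hf : PreservesWeights ν μ f)
    (n : ℕ) :
    PreservesWeights (fun x : Fin n → V => ∏ i, ν (x i)) (fun y => ∏ i, μ (y i))
      (fun x i => f (x i)) := by
  classical
  refine preservesWeights_of_fmeas_preimage_singleton fun y => ?_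
  have hpi : preimageFinset (fun x i => f (x i)) {y}
      = Fintype.piFinset fun i => preimageFinset f {y i} := by
    ext x
    simp [funext_iff]
  have hcoord : ∀ i, fmeas ν (preimageFinset f {y i}) = μ (y i) := fun i => by
    simpa [fmeas] using hf {y i}
  simp only [fmeas, hpi, ← Finset.prod_univ_sum]
  exact Finset.prod_congr rfl fun i _ => hcoord i

end Weights

section Homomorphisms

variable {V W : Type*} {H : SimpleGraph V} {G : SimpleGraph W}

lemma IsIndepSet.preimageFinset [Fintype V] (f : H →g G) {I : Finset W} (hI : IsIndepSet G I) :
    IsIndepSet H (preimageFinset f I) := fun _ hu _ hv hadj =>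
  hI _ (mem_preimageFinset.mp hu) _ (mem_preimageFinset.mp hv) (f.map_adj hadj)

def tpowHom (f : H →g G) (n : ℕ) : tpow H n →g tpow G n where
  toFun x i := f (x i)
  map_rel' hxy := by
    obtain ⟨i, -⟩ := Function.ne_iff.mp hxy.1
    exact ⟨fun h => (f.map_adj (hxy.2 i)).ne (congrFun h i), fun i => f.map_adj (hxy.2 i)⟩

def diagHom {n : ℕ} (φ : Fin n → (H ≃g H)) (hn : 0 < n) : H →g tpow H n where
  toFun x i := φ i x
  map_rel' hxy :=
    ⟨fun h => hxy.ne ((φ ⟨0, hn⟩).injective (congrFun h ⟨0, hn⟩)),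
      fun i => (φ i).map_adj_iff.mpr hxy⟩

end Homomorphisms

section AlphaBar

variable {V : Type*} (G : SimpleGraph V) (μ : V → ℝ)

lemma fmeas_le_alphaBar [Finite V] {I : Finset V} (hI : IsIndepSet G I) :
    fmeas μ I ≤ alphaBar G μ := by
  have : Fintype V := Fintype.ofFinite V
  refine le_csSup ((Set.finite_range fun I : Finset V => fmeas μ I).subset ?_).bddAbove ⟨I, hI, rfl⟩
  rintro _ ⟨J, -, rfl⟩
  exact ⟨J, rfl⟩

lemma alphaBar_le {b : ℝ} (hb : ∀ I, IsIndepSet G I → fmeas μ I ≤ b) : alphaBar G μ ≤ b := by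
  refine csSup_le ⟨0, ∅, by simp [IsIndepSet], by simp [fmeas]⟩ ?_
  rintro _ ⟨I, hI, rfl⟩
  exact hb I hI

end AlphaBar

lemma alphaBar_le_alphaBar_of_hom {V W : Type*} [Fintype V] {G : SimpleGraph V} {G' : SimpleGraph W}
    {μ : V → ℝ} {μ' : W → ℝ} (f : G →g G')
    (hf : PreservesWeights μ μ' f) : alphaBar G' μ' ≤ alphaBar G μ :=
  alphaBar_le _ _ fun I hI => hf I ▸ fmeas_le_alphaBar G μ (hI.preimageFinset f)

section VertexTransitive

variable {V : Type*} [Fintype V] {H : SimpleGraph V}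

lemma card_filter_apply_eq_of_transitive [DecidableEq V]
    (htrans : ∀ u v : V, ∃ φ : H ≃g H, φ u = v) (x w w' : V) :
    #{σ : H ≃g H | σ x = w} = #{σ : H ≃g H | σ x = w'} := by
  obtain ⟨τ, hτ⟩ := htrans w w'
  refine Finset.card_equiv (Equiv.mulLeft τ) fun σ => ?_
  simp only [Finset.mem_filter, Finset.mem_univ, true_and, Equiv.coe_mulLeft, RelIso.mul_apply]
  exact ⟨fun h => h ▸ hτ, fun h => τ.injective (h.trans hτ.symm)⟩

lemma preservesWeights_eval_of_transitive (htrans : ∀ u v : V, ∃ φ : H ≃g H, φ u = v) (x : V) :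
    PreservesWeights (fun _ : H ≃g H => (1 : ℝ))
      (fun _ : V => (Fintype.card (H ≃g H) : ℝ) / Fintype.card V) (fun σ => σ x) := by
  classical
  refine preservesWeights_of_fmeas_preimage_singleton fun w => ?_
  have hfiber :
      preimageFinset (fun σ : H ≃g H => σ x) {w} = ({σ : H ≃g H | σ x = w} : Finset _) := by
    ext σ
    simp
  have hcount : Fintype.card V * #{σ : H ≃g H | σ x = w} = Fintype.card (H ≃g H) := by
    rw [← Finset.card_univ (α := H ≃g H),
      Finset.card_eq_sum_card_fiberwise (s := univ) (f := fun σ : H ≃g H => σ x) (t := univ)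
        (fun _ _ => Finset.mem_univ _),
      Finset.sum_congr rfl fun w' _ => card_filter_apply_eq_of_transitive htrans x w' w,
      Finset.sum_const, Finset.card_univ, smul_eq_mul]
  have hV : (Fintype.card V : ℝ) ≠ 0 := Nat.cast_ne_zero.mpr (Fintype.card_pos_iff.mpr ⟨x⟩).ne'
  simp only [fmeas, Finset.sum_const, nsmul_eq_mul, mul_one, hfiber]
  rw [eq_div_iff hV, mul_comm, ← hcount]
  push_cast
  ring

lemma sum_fmeas_preimageFinset_diag [Nonempty V] (htrans : ∀ u v : V, ∃ φ : H ≃g H, φ u = v)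
    (n : ℕ) (S : Finset (Fin n → V)) :
    ∑ φ : Fin n → (H ≃g H), fmeas (fun _ => (1 : ℝ) / Fintype.card V)
        (preimageFinset (fun x i => φ i x) S)
      = (Fintype.card (H ≃g H) : ℝ) ^ n *
          fmeas (fun _ : Fin n → V => ∏ _i : Fin n, (1 : ℝ) / Fintype.card V) S := by
  classical
  set u : ℝ := 1 / Fintype.card V
  set c : ℝ := Fintype.card (H ≃g H) / Fintype.card V
  have hx : ∀ x : V, ∑ φ : Fin n → (H ≃g H), (if (fun i => φ i x) ∈ S then (1 : ℝ) else 0)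
      = #S * c ^ n := fun x => by
    simpa [fmeas, preimageFinset, Finset.sum_filter, c, div_pow] using
      (preservesWeights_eval_of_transitive htrans x).pi n S
  calc ∑ φ : Fin n → (H ≃g H), fmeas (fun _ => u) (preimageFinset (fun x i => φ i x) S)
      = ∑ x : V, u * ∑ φ : Fin n → (H ≃g H), (if (fun i => φ i x) ∈ S then (1 : ℝ) else 0) := by
        simp only [fmeas, preimageFinset, Finset.sum_filter, Finset.mul_sum, mul_ite, mul_one,
          mul_zero]
        exact Finset.sum_comm
    _ = Fintype.card V * (u * (#S * c ^ n)) := by simp [hx]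
    _ = _ := by
        simp only [fmeas, Finset.prod_const, Finset.card_univ, Fintype.card_fin, Finset.sum_const,
          nsmul_eq_mul, u, c]
        field_simp
        ring

lemma alphaPow_le_alphaBar_of_transitive [Nonempty V]
    (htrans : ∀ u v : V, ∃ φ : H ≃g H, φ u = v) {n : ℕ} (hn : 0 < n) :
    alphaPow H (fun _ => (1 : ℝ) / Fintype.card V) n
      ≤ alphaBar H (fun _ => (1 : ℝ) / Fintype.card V) := by
  refine alphaBar_le _ _ fun S hS => ?_
  have : Nonempty (H ≃g H) := ⟨RelIso.refl _⟩
  refine le_of_mul_le_mul_left ?_ (by positivity : (0 : ℝ) < (Fintype.card (H ≃g H) : ℝ) ^ n)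
  calc (Fintype.card (H ≃g H) : ℝ) ^ n * fmeas _ S
      = ∑ φ : Fin n → (H ≃g H), fmeas (fun _ => (1 : ℝ) / Fintype.card V)
          (preimageFinset (fun x i => φ i x) S) := (sum_fmeas_preimageFinset_diag htrans n S).symm
    _ ≤ ∑ _φ : Fin n → (H ≃g H), alphaBar H (fun _ => (1 : ℝ) / Fintype.card V) :=
        Finset.sum_le_sum fun φ _ => fmeas_le_alphaBar H _ (hS.preimageFinset (diagHom φ hn))
    _ = (Fintype.card (H ≃g H) : ℝ) ^ n * alphaBar H (fun _ => (1 : ℝ) / Fintype.card V) := by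
        simp

end VertexTransitive

theorem stmt_18_general {VH VG : Type*} [Fintype VH] [Nonempty VH]
    (H : SimpleGraph VH) (G : SimpleGraph VG)
    (μG : VG → ℝ)
    (htrans : ∀ u v : VH, ∃ φ : H ≃g H, φ u = v)
    (h : VH → VG)
    (hhom : ∀ u v, H.Adj u v → G.Adj (h u) (h v))
    (hmp : ∀ S : Finset VG,
      fmeas (fun _ => (1 : ℝ) / Fintype.card VH)
          (@Finset.filter _ (fun x => h x ∈ S) (Classical.decPred _) Finset.univ)
        = fmeas μG S)
    (L : ℝ) (hL : Tendsto (fun n => alphaPow G μG n) atTop (nhds L)) :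
    L ≤ alphaBar H (fun _ => (1 : ℝ) / Fintype.card VH) := by
  let f : H →g G := ⟨h, hhom _ _⟩
  have hpow : ∀ n, 0 < n → alphaPow G μG n ≤ alphaBar H (fun _ => (1 : ℝ) / Fintype.card VH) :=
    fun n hn => (alphaBar_le_alphaBar_of_hom (tpowHom f n) (PreservesWeights.pi hmp n)).trans
      (alphaPow_le_alphaBar_of_transitive htrans hn)
  exact le_of_tendsto hL ((eventually_gt_atTop 0).mono hpow)

theorem stmt_18 {VH VG : Type*} [Fintype VH] [Nonempty VH] [Fintype VG]
    (H : SimpleGraph VH) (G : SimpleGraph VG)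
    (μG : VG → ℝ) (hμG0 : ∀ v, 0 ≤ μG v) (hμG1 : ∑ v, μG v = 1)
    (htrans : ∀ u v : VH, ∃ φ : H ≃g H, φ u = v)
    (h : VH → VG)
    (hhom : ∀ u v, H.Adj u v → G.Adj (h u) (h v))
    (hmp : ∀ S : Finset VG,
      fmeas (fun _ => (1 : ℝ) / Fintype.card VH)
          (@Finset.filter _ (fun x => h x ∈ S) (Classical.decPred _) Finset.univ)
        = fmeas μG S)
    (L : ℝ) (hL : Tendsto (fun n => alphaPow G μG n) atTop (nhds L)) :
    L ≤ alphaBar H (fun _ => (1 : ℝ) / Fintype.card VH) :=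
  stmt_18_general H G μG htrans h hhom hmp L hL
end
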